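/- Let G : P2(ℝ^d) → (−∞,+∞] be proper, lower semicontinuous with respect to W2, and convex along generalized geodesics, with argmin G nonempty. Let {ε_n} ⊂ ℝ_{≥0} with ∑_n ε_n < ∞, let {τ_n} ⊂ ℝ_{>0}, and let {μ_n} ⊂ P2(ℝ^d) satisfy W2(μ_{n+1}, J_{τ_n}(μ_n)) ≤ ε_n for all n, where J_τ(μ) is the unique minimizer of ν ↦ G(ν) + (1/(2τ)) W2²(ν, μ). Then for every ν ∈ argmin G there exists a constant C > 0 such that the quasi-Fejér inequality W2²(μ_{n+1}, ν) ≤ W2²(μ_n, ν) + C ε_n holds for all n. -/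

import Mathlib

open MeasureTheory Filter Topology ENNReal

noncomputable section

/-- Euclidean space ℝ^d. -/
abbrev Ed (d : ℕ) := EuclideanSpace ℝ (Fin d)

/-- `P2 d`: Borel probability measures on ℝ^d with finite second moment. -/
def P2 (d : ℕ) : Set (Measure (Ed d)) :=
  {μ | IsProbabilityMeasure μ ∧ ∫⁻ x, ENNReal.ofReal (‖x‖ ^ 2) ∂μ < ⊤}

/-- A coupling of `μ` and `ν`. -/
def IsCoupling {d : ℕ} (γ : Measure (Ed d × Ed d)) (μ ν : Measure (Ed d)) : Prop :=
  IsProbabilityMeasure γ ∧ γ.map Prod.fst = μ ∧ γ.map Prod.snd = ν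

/-- `p`-th power transport cost of a plan `γ`. -/
def Wcost {d : ℕ} (p : ℝ) (γ : Measure (Ed d × Ed d)) : ℝ≥0∞ :=
  ∫⁻ z, ENNReal.ofReal (‖z.1 - z.2‖ ^ p) ∂γ

/-- Minimal `p`-th power transport cost between `μ` and `ν`. -/
def minCost {d : ℕ} (p : ℝ) (μ ν : Measure (Ed d)) : ℝ≥0∞ :=
  ⨅ γ : {γ : Measure (Ed d × Ed d) // IsCoupling γ μ ν}, Wcost p γ.1

/-- The `p`-Wasserstein distance. -/
def Wp {d : ℕ} (p : ℝ) (μ ν : Measure (Ed d)) : ℝ :=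
  (minCost p μ ν ^ (1 / p)).toReal

/-- The 2-Wasserstein distance. -/
def W2 {d : ℕ} (μ ν : Measure (Ed d)) : ℝ := Wp 2 μ ν

/-- Optimal transport plan for the quadratic cost. -/
def IsOptimalPlan {d : ℕ} (γ : Measure (Ed d × Ed d)) (μ ν : Measure (Ed d)) : Prop :=
  IsCoupling γ μ ν ∧ Wcost 2 γ = minCost 2 μ ν

/-- `curve` is a generalized geodesic between `μ0` and `μ1` with base `base`. -/
def IsGenGeodesic {d : ℕ} (curve : ℝ → Measure (Ed d))
    (μ0 μ1 base : Measure (Ed d)) : Prop :=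
  ∃ γ : Measure (Ed d × Ed d × Ed d),
    IsProbabilityMeasure γ ∧
    IsOptimalPlan (γ.map (fun z => (z.1, z.2.1))) base μ0 ∧
    IsOptimalPlan (γ.map (fun z => (z.1, z.2.2))) base μ1 ∧
    ∀ t ∈ Set.Icc (0 : ℝ) 1,
      curve t = γ.map (fun z => (1 - t) • z.2.1 + t • z.2.2)

/-- Convexity along generalized geodesics. -/
def ConvexAlongGenGeod {d : ℕ} (G : Measure (Ed d) → EReal) : Prop :=
  ∀ μ0 ∈ P2 d, ∀ μ1 ∈ P2 d, ∀ base ∈ P2 d,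
    ∃ curve : ℝ → Measure (Ed d), IsGenGeodesic curve μ0 μ1 base ∧
      ∀ t ∈ Set.Icc (0 : ℝ) 1,
        G (curve t) ≤ ((1 - t : ℝ) : EReal) * G μ0 + ((t : ℝ) : EReal) * G μ1

/-- `G` is proper: never `⊥` and finite somewhere on `P2`. -/
def ProperOn {d : ℕ} (G : Measure (Ed d) → EReal) : Prop :=
  (∀ μ, G μ ≠ ⊥) ∧ ∃ μ ∈ P2 d, G μ ≠ ⊤

/-- Sequential lower semicontinuity with respect to `W2`. -/
def LscW2 {d : ℕ} (G : Measure (Ed d) → EReal) : Prop :=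
  ∀ μ ∈ P2 d, ∀ s : ℕ → Measure (Ed d), (∀ n, s n ∈ P2 d) →
    Tendsto (fun n => W2 (s n) μ) atTop (𝓝 0) →
    G μ ≤ liminf (fun n => G (s n)) atTop

/-- The JKO (Moreau–Yosida) energy `ν ↦ G ν + (1/(2τ)) W2²(ν, μ)`. -/
def JKOEnergy {d : ℕ} (G : Measure (Ed d) → EReal) (τ : ℝ)
    (μ ν : Measure (Ed d)) : EReal :=
  G ν + ((1 / (2 * τ) * (W2 ν μ) ^ 2 : ℝ) : EReal)

/-- `ν` is a minimizer over `P2` of the JKO energy with base point `μ`. -/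
def IsJKOMin {d : ℕ} (G : Measure (Ed d) → EReal) (τ : ℝ)
    (μ ν : Measure (Ed d)) : Prop :=
  ν ∈ P2 d ∧ ∀ ρ ∈ P2 d, JKOEnergy G τ μ ν ≤ JKOEnergy G τ μ ρ

/-- `μ` is a global minimizer of `G` over `P2`. -/
def IsArgminG {d : ℕ} (G : Measure (Ed d) → EReal) (μ : Measure (Ed d)) : Prop :=
  μ ∈ P2 d ∧ ∀ ν ∈ P2 d, G μ ≤ G ν

/-- The infimum of `G` over `P2`. -/
def infG {d : ℕ} (G : Measure (Ed d) → EReal) : EReal := sInf (G '' P2 d)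

/-- Convergence in the topology `τ_{w,2}`: integrals of continuous functions with
subquadratic growth converge. -/
def TendstoWeak2 {d : ℕ} (s : ℕ → Measure (Ed d)) (μ : Measure (Ed d)) : Prop :=
  ∀ f : Ed d → ℝ, Continuous f →
    Tendsto (fun x => f x / (1 + ‖x‖ ^ 2)) (comap (fun x : Ed d => ‖x‖) atTop) (𝓝 0) →
    Tendsto (fun n => ∫ x, f x ∂(s n)) atTop (𝓝 (∫ x, f x ∂μ))

/-- Narrow convergence: integrals of bounded continuous functions converge. -/
def TendstoNarrow {d : ℕ} (s : ℕ → Measure (Ed d)) (μ : Measure (Ed d)) : Prop :=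
  ∀ f : Ed d → ℝ, Continuous f → (∃ M, ∀ x, |f x| ≤ M) →
    Tendsto (fun n => ∫ x, f x ∂(s n)) atTop (𝓝 (∫ x, f x ∂μ))

/-- The pushforward by the explicit gradient step `x ↦ x - τ ∇F(x)`. -/
def gradStep {d : ℕ} (f' : Ed d → Ed d) (τ : ℝ) (μ : Measure (Ed d)) : Measure (Ed d) :=
  μ.map (fun x => x - τ • f' x)

/-- The composite objective `G(μ) = ∫ F dμ + H(μ)`. -/
def Gsum {d : ℕ} (F : Ed d → ℝ) (H : Measure (Ed d) → EReal)
    (μ : Measure (Ed d)) : EReal :=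
  ((∫ x, F x ∂μ : ℝ) : EReal) + H μ

end
lemma wcost_eq {d : ℕ} (γ : Measure (Ed d × Ed d)) :
    Wcost 2 γ = ∫⁻ z, (‖z.1 - z.2‖₊ : ℝ≥0∞) ^ (2:ℝ) ∂γ := by
  unfold Wcost
  refine lintegral_congr fun z => ?_
  rw [← ENNReal.ofReal_rpow_of_nonneg (norm_nonneg _) (by norm_num),
    ofReal_norm_eq_enorm, enorm_eq_nnnorm]
open ProbabilityTheory

/-- second moment -/
noncomputable def M2 {d : ℕ} (μ : Measure (Ed d)) : ℝ≥0∞ := ∫⁻ x, (‖x‖₊ : ℝ≥0∞) ^ (2:ℝ) ∂μ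

lemma nnnorm_rpow_two_eq {E : Type*} [NormedAddCommGroup E] (x : E) :
    (‖x‖₊ : ℝ≥0∞) ^ (2:ℝ) = ENNReal.ofReal (‖x‖ ^ 2) := by
  rw [← enorm_eq_nnnorm, ← ofReal_norm_eq_enorm,
    ENNReal.ofReal_rpow_of_nonneg (norm_nonneg _) (by norm_num)]
  norm_num [Real.rpow_natCast]

lemma M2_lt_top {d : ℕ} {μ : Measure (Ed d)} (hμ : μ ∈ P2 d) : M2 μ < ⊤ := by
  have h2 := hμ.2
  unfold M2
  simpa only [nnnorm_rpow_two_eq] using h2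

lemma isCoupling_prod {d : ℕ} {μ ν : Measure (Ed d)} (hμ : IsProbabilityMeasure μ)
    (hν : IsProbabilityMeasure ν) : IsCoupling (μ.prod ν) μ ν := by
  refine ⟨by infer_instance, ?_, ?_⟩
  · rw [Measure.map_fst_prod]; simp
  · rw [Measure.map_snd_prod]; simp

lemma minCost_le_wcost {d : ℕ} {μ ν : Measure (Ed d)} {γ : Measure (Ed d × Ed d)}
    (h : IsCoupling γ μ ν) : minCost 2 μ ν ≤ Wcost 2 γ := iInf_le _ (⟨γ, h⟩ : {γ // IsCoupling γ μ ν})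

lemma lintegral_fst_coupling {d : ℕ} {μ ν : Measure (Ed d)} {γ : Measure (Ed d × Ed d)}
    (h : IsCoupling γ μ ν) (f : Ed d → ℝ≥0∞) (hf : Measurable f) :
    ∫⁻ z, f z.1 ∂γ = ∫⁻ x, f x ∂μ := by
  rw [← h.2.1, lintegral_map hf measurable_fst]

lemma lintegral_snd_coupling {d : ℕ} {μ ν : Measure (Ed d)} {γ : Measure (Ed d × Ed d)}
    (h : IsCoupling γ μ ν) (f : Ed d → ℝ≥0∞) (hf : Measurable f) :
    ∫⁻ z, f z.2 ∂γ = ∫⁻ x, f x ∂ν := by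
  rw [← h.2.2, lintegral_map hf measurable_snd]

lemma wcost_le_moments {d : ℕ} {μ ν : Measure (Ed d)} {γ : Measure (Ed d × Ed d)}
    (h : IsCoupling γ μ ν) : Wcost 2 γ ≤ 2 * M2 μ + 2 * M2 ν := by
  rw [wcost_eq]
  have hle : ∀ z : Ed d × Ed d, (‖z.1 - z.2‖₊ : ℝ≥0∞) ^ (2:ℝ) ≤
      2 * (‖z.1‖₊ : ℝ≥0∞) ^ (2:ℝ) + 2 * (‖z.2‖₊ : ℝ≥0∞) ^ (2:ℝ) := by
    intro z
    have htri := norm_sub_le z.1 z.2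
    have h1 : (‖z.1 - z.2‖ : ℝ) ^ 2 ≤ 2 * ‖z.1‖ ^ 2 + 2 * ‖z.2‖ ^ 2 := by
      nlinarith [norm_nonneg z.1, norm_nonneg z.2, norm_nonneg (z.1 - z.2),
        sq_nonneg (‖z.1‖ - ‖z.2‖), pow_le_pow_left₀ (norm_nonneg (z.1 - z.2)) htri 2]
    calc (‖z.1 - z.2‖₊ : ℝ≥0∞) ^ (2:ℝ)
        = ENNReal.ofReal (‖z.1 - z.2‖ ^ 2) := nnnorm_rpow_two_eq _
      _ ≤ ENNReal.ofReal (2 * ‖z.1‖ ^ 2 + 2 * ‖z.2‖ ^ 2) := ENNReal.ofReal_le_ofReal h1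
      _ ≤ 2 * (‖z.1‖₊ : ℝ≥0∞) ^ (2:ℝ) + 2 * (‖z.2‖₊ : ℝ≥0∞) ^ (2:ℝ) := by
          rw [ENNReal.ofReal_add (by positivity) (by positivity)]
          gcongr <;>
          · rw [ENNReal.ofReal_mul (by norm_num), nnnorm_rpow_two_eq]
            norm_num
  calc ∫⁻ z, (‖z.1 - z.2‖₊ : ℝ≥0∞) ^ (2:ℝ) ∂γ
      ≤ ∫⁻ z, (2 * (‖z.1‖₊ : ℝ≥0∞) ^ (2:ℝ) + 2 * (‖z.2‖₊ : ℝ≥0∞) ^ (2:ℝ)) ∂γ :=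
        lintegral_mono hle
    _ = 2 * M2 μ + 2 * M2 ν := by
        rw [lintegral_add_left (by fun_prop)]
        rw [lintegral_const_mul _ (by fun_prop), lintegral_const_mul _ (by fun_prop),
          show (∫⁻ (a : Ed d × Ed d), (‖a.1‖₊:ℝ≥0∞) ^ (2:ℝ) ∂γ) = M2 μ from
            lintegral_fst_coupling h (fun x => (‖x‖₊:ℝ≥0∞) ^ (2:ℝ)) (by fun_prop),
          show (∫⁻ (a : Ed d × Ed d), (‖a.2‖₊:ℝ≥0∞) ^ (2:ℝ) ∂γ) = M2 ν from
            lintegral_snd_coupling h (fun x => (‖x‖₊:ℝ≥0∞) ^ (2:ℝ)) (by fun_prop)]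

lemma minCost_lt_top {d : ℕ} {μ ν : Measure (Ed d)} (hμ : μ ∈ P2 d) (hν : ν ∈ P2 d) :
    minCost 2 μ ν < ⊤ := by
  refine lt_of_le_of_lt (le_trans (minCost_le_wcost (isCoupling_prod hμ.1 hν.1))
    (wcost_le_moments (isCoupling_prod hμ.1 hν.1))) ?_
  have h1 := M2_lt_top hμ; have h2 := M2_lt_top hν
  finiteness
lemma isCoupling_swap {d : ℕ} {μ ν : Measure (Ed d)} {γ : Measure (Ed d × Ed d)}
    (h : IsCoupling γ μ ν) : IsCoupling (γ.map Prod.swap) ν μ := by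
  obtain ⟨hp, h1, h2⟩ := h
  haveI := hp
  refine ⟨Measure.isProbabilityMeasure_map measurable_swap.aemeasurable, ?_, ?_⟩
  · rw [Measure.map_map measurable_fst measurable_swap]; exact h2
  · rw [Measure.map_map measurable_snd measurable_swap]; exact h1

lemma wcost_swap {d : ℕ} (γ : Measure (Ed d × Ed d)) :
    Wcost 2 (γ.map Prod.swap) = Wcost 2 γ := by
  unfold Wcost
  rw [lintegral_map (by fun_prop) measurable_swap]
  exact lintegral_congr fun z => by rw [Prod.fst_swap, Prod.snd_swap, norm_sub_rev]

lemma minCost_symm {d : ℕ} (μ ν : Measure (Ed d)) : minCost 2 μ ν = minCost 2 ν μ := by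
  have key : ∀ (α β : Measure (Ed d)), minCost 2 α β ≤ minCost 2 β α := by
    intro α β
    refine le_iInf fun γ => ?_
    calc minCost 2 α β ≤ Wcost 2 (γ.1.map Prod.swap) := minCost_le_wcost (isCoupling_swap γ.2)
      _ = Wcost 2 γ.1 := wcost_swap _
  exact le_antisymm (key μ ν) (key ν μ)

lemma w2_eq_sqrt {d : ℕ} (μ ν : Measure (Ed d)) :
    W2 μ ν = Real.sqrt (minCost 2 μ ν).toReal := by
  unfold W2 Wp
  rw [← ENNReal.toReal_rpow, Real.sqrt_eq_rpow]

lemma w2_nonneg {d : ℕ} (μ ν : Measure (Ed d)) : 0 ≤ W2 μ ν := by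
  rw [w2_eq_sqrt]; exact Real.sqrt_nonneg _

lemma w2_symm {d : ℕ} (μ ν : Measure (Ed d)) : W2 μ ν = W2 ν μ := by
  rw [w2_eq_sqrt, w2_eq_sqrt, minCost_symm]

lemma w2_sq {d : ℕ} {μ ν : Measure (Ed d)} (h : minCost 2 μ ν ≠ ⊤) :
    (W2 μ ν) ^ 2 = (minCost 2 μ ν).toReal := by
  rw [w2_eq_sqrt, Real.sq_sqrt ENNReal.toReal_nonneg]

lemma w2_sq_le {d : ℕ} {μ ν : Measure (Ed d)} {γ : Measure (Ed d × Ed d)}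
    (h : IsCoupling γ μ ν) (hfin : Wcost 2 γ ≠ ⊤) :
    (W2 μ ν) ^ 2 ≤ (Wcost 2 γ).toReal := by
  rw [w2_sq (fun ht => hfin (top_le_iff.1 (ht ▸ minCost_le_wcost h)))]
  exact ENNReal.toReal_mono hfin (minCost_le_wcost h)
open ProbabilityTheory

variable {d : ℕ}

lemma map_compProd_prod_left (ν : Measure (Ed d)) [IsProbabilityMeasure ν]
    (κ lam : Kernel (Ed d) (Ed d)) [IsMarkovKernel κ] [IsMarkovKernel lam] :
    (ν ⊗ₘ (κ ×ₖ lam)).map (fun w => (w.1, w.2.1)) = ν ⊗ₘ κ := by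
  have hm : Measurable fun w : Ed d × Ed d × Ed d => (w.1, w.2.1) := by fun_prop
  ext s hs
  rw [Measure.map_apply hm hs, Measure.compProd_apply (hm hs), Measure.compProd_apply hs]
  refine lintegral_congr fun y => ?_
  have : (Prod.mk y ⁻¹' ((fun w : Ed d × Ed d × Ed d => (w.1, w.2.1)) ⁻¹' s)) =
      (Prod.mk y ⁻¹' s) ×ˢ Set.univ := by
    ext p; simp [Set.mem_prod]
  rw [this, Kernel.prod_apply, Measure.prod_prod, measure_univ, mul_one]

lemma map_compProd_prod_right (ν : Measure (Ed d)) [IsProbabilityMeasure ν]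
    (κ lam : Kernel (Ed d) (Ed d)) [IsMarkovKernel κ] [IsMarkovKernel lam] :
    (ν ⊗ₘ (κ ×ₖ lam)).map (fun w => (w.1, w.2.2)) = ν ⊗ₘ lam := by
  have hm : Measurable fun w : Ed d × Ed d × Ed d => (w.1, w.2.2) := by fun_prop
  ext s hs
  rw [Measure.map_apply hm hs, Measure.compProd_apply (hm hs), Measure.compProd_apply hs]
  refine lintegral_congr fun y => ?_
  have : (Prod.mk y ⁻¹' ((fun w : Ed d × Ed d × Ed d => (w.1, w.2.2)) ⁻¹' s)) =
      Set.univ ×ˢ (Prod.mk y ⁻¹' s) := by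
    ext p; simp [Set.mem_prod]
  rw [this, Kernel.prod_apply, Measure.prod_prod, measure_univ, one_mul]

lemma lintegral_map_pair {m : Measure (Ed d × Ed d × Ed d)}
    (f : Ed d × Ed d × Ed d → Ed d × Ed d) (hf : Measurable f)
    (g : Ed d × Ed d → ℝ≥0∞) (hg : Measurable g) :
    ∫⁻ w, g (f w) ∂m = ∫⁻ z, g z ∂(m.map f) := (lintegral_map hg hf).symm

lemma glue_bound {μ ν ρ : Measure (Ed d)} {η θ : Measure (Ed d × Ed d)}
    (hη : IsCoupling η μ ν) (hθ : IsCoupling θ ν ρ) :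
    minCost 2 μ ρ ^ (2:ℝ)⁻¹ ≤ Wcost 2 η ^ (2:ℝ)⁻¹ + Wcost 2 θ ^ (2:ℝ)⁻¹ := by
  haveI : IsProbabilityMeasure η := hη.1
  haveI : IsProbabilityMeasure θ := hθ.1
  haveI : IsProbabilityMeasure ν := by
    rw [← hθ.2.1]; exact Measure.isProbabilityMeasure_map measurable_fst.aemeasurable
  set η' : Measure (Ed d × Ed d) := η.map Prod.swap with hη'def
  haveI : IsProbabilityMeasure η' := Measure.isProbabilityMeasure_map measurable_swap.aemeasurable
  have hη'fst : η'.fst = ν := by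
    rw [Measure.fst, hη'def, Measure.map_map measurable_fst measurable_swap]
    exact hη.2.2
  have hθfst : θ.fst = ν := by rw [Measure.fst]; exact hθ.2.1
  set κ := η'.condKernel
  set lam := θ.condKernel
  have hκ : ν ⊗ₘ κ = η' := by rw [← hη'fst]; exact η'.disintegrate η'.condKernel
  have hlam : ν ⊗ₘ lam = θ := by rw [← hθfst]; exact θ.disintegrate θ.condKernel
  set σ : Measure (Ed d × Ed d × Ed d) := ν ⊗ₘ (κ ×ₖ lam) with hσdef
  have hml : Measurable fun w : Ed d × Ed d × Ed d => (w.1, w.2.1) := by fun_prop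
  have hmr : Measurable fun w : Ed d × Ed d × Ed d => (w.1, w.2.2) := by fun_prop
  have hmc : Measurable fun w : Ed d × Ed d × Ed d => (w.2.1, w.2.2) := by fun_prop
  have hmapl : σ.map (fun w => (w.1, w.2.1)) = η' := by rw [hσdef, map_compProd_prod_left, hκ]
  have hmapr : σ.map (fun w => (w.1, w.2.2)) = θ := by rw [hσdef, map_compProd_prod_right, hlam]
  set γ' : Measure (Ed d × Ed d) := σ.map (fun w => (w.2.1, w.2.2)) with hγ'def
  have hγ' : IsCoupling γ' μ ρ := by
    refine ⟨Measure.isProbabilityMeasure_map hmc.aemeasurable, ?_, ?_⟩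
    · rw [hγ'def, Measure.map_map measurable_fst hmc]
      have he : (Prod.fst ∘ fun w : Ed d × Ed d × Ed d => (w.2.1, w.2.2)) =
          (Prod.snd ∘ fun w : Ed d × Ed d × Ed d => (w.1, w.2.1)) := rfl
      rw [he, ← Measure.map_map measurable_snd hml, hmapl, hη'def,
        Measure.map_map measurable_snd measurable_swap]
      exact hη.2.1
    · rw [hγ'def, Measure.map_map measurable_snd hmc]
      have he : (Prod.snd ∘ fun w : Ed d × Ed d × Ed d => (w.2.1, w.2.2)) =
          (Prod.snd ∘ fun w : Ed d × Ed d × Ed d => (w.1, w.2.2)) := rfl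
      rw [he, ← Measure.map_map measurable_snd hmr, hmapr]
      exact hθ.2.2
  -- cost comparison via eLpNorm triangle inequality
  set f : Ed d × Ed d × Ed d → Ed d := fun w => w.2.1 - w.1 with hfdef
  set g : Ed d × Ed d × Ed d → Ed d := fun w => w.1 - w.2.2 with hgdef
  have eLp_eq : ∀ (F : Ed d × Ed d × Ed d → Ed d), Measurable F →
      eLpNorm F 2 σ = (∫⁻ w, (‖F w‖₊ : ℝ≥0∞) ^ (2:ℝ) ∂σ) ^ (2:ℝ)⁻¹ := by
    intro F hF
    rw [eLpNorm_eq_lintegral_rpow_enorm_toReal (by norm_num) (by norm_num)]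
    norm_num
    rfl
  have hf_int : ∫⁻ w, (‖f w‖₊ : ℝ≥0∞) ^ (2:ℝ) ∂σ = Wcost 2 η := by
    rw [hfdef]
    calc ∫⁻ w, (‖w.2.1 - w.1‖₊ : ℝ≥0∞) ^ (2:ℝ) ∂σ
        = ∫⁻ z, (‖z.2 - z.1‖₊ : ℝ≥0∞) ^ (2:ℝ) ∂(σ.map (fun w => (w.1, w.2.1))) := by
          rw [lintegral_map (by fun_prop) hml]
      _ = ∫⁻ z, (‖z.2 - z.1‖₊ : ℝ≥0∞) ^ (2:ℝ) ∂η' := by rw [hmapl]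
      _ = ∫⁻ z, (‖z.1 - z.2‖₊ : ℝ≥0∞) ^ (2:ℝ) ∂η := by
          rw [hη'def, lintegral_map (by fun_prop) measurable_swap]
          exact lintegral_congr fun z => by rw [Prod.snd_swap, Prod.fst_swap]
      _ = Wcost 2 η := (wcost_eq η).symm
  have hg_int : ∫⁻ w, (‖g w‖₊ : ℝ≥0∞) ^ (2:ℝ) ∂σ = Wcost 2 θ := by
    rw [hgdef]
    calc ∫⁻ w, (‖w.1 - w.2.2‖₊ : ℝ≥0∞) ^ (2:ℝ) ∂σ
        = ∫⁻ z, (‖z.1 - z.2‖₊ : ℝ≥0∞) ^ (2:ℝ) ∂(σ.map (fun w => (w.1, w.2.2))) := by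
          rw [lintegral_map (by fun_prop) hmr]
      _ = Wcost 2 θ := by rw [hmapr, wcost_eq]
  have hfg_int : ∫⁻ w, (‖(f + g) w‖₊ : ℝ≥0∞) ^ (2:ℝ) ∂σ = Wcost 2 γ' := by
    have : ∀ w : Ed d × Ed d × Ed d, (f + g) w = w.2.1 - w.2.2 := by
      intro w; simp [hfdef, hgdef]
    calc ∫⁻ w, (‖(f + g) w‖₊ : ℝ≥0∞) ^ (2:ℝ) ∂σ
        = ∫⁻ w, (‖w.2.1 - w.2.2‖₊ : ℝ≥0∞) ^ (2:ℝ) ∂σ := by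
          exact lintegral_congr fun w => by rw [this]
      _ = ∫⁻ z, (‖z.1 - z.2‖₊ : ℝ≥0∞) ^ (2:ℝ) ∂γ' := by
          rw [hγ'def, lintegral_map (by fun_prop) hmc]
      _ = Wcost 2 γ' := (wcost_eq γ').symm
  have htri : eLpNorm (f + g) 2 σ ≤ eLpNorm f 2 σ + eLpNorm g 2 σ :=
    eLpNorm_add_le (by fun_prop) (by fun_prop) (by norm_num)
  calc minCost 2 μ ρ ^ (2:ℝ)⁻¹
      ≤ Wcost 2 γ' ^ (2:ℝ)⁻¹ :=
        ENNReal.rpow_le_rpow (minCost_le_wcost hγ') (by norm_num)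
    _ = eLpNorm (f + g) 2 σ := by rw [← hfg_int, ← eLp_eq _ (by fun_prop)]
    _ ≤ eLpNorm f 2 σ + eLpNorm g 2 σ := htri
    _ = Wcost 2 η ^ (2:ℝ)⁻¹ + Wcost 2 θ ^ (2:ℝ)⁻¹ := by
        rw [eLp_eq f (by fun_prop), eLp_eq g (by fun_prop), hf_int, hg_int]
lemma sqrt_add_le (a b : ℝ) (hb : 0 ≤ b) :
    Real.sqrt (a + b) ≤ Real.sqrt a + Real.sqrt b := by
  rcases le_or_gt a 0 with ha | ha
  · calc Real.sqrt (a + b) ≤ Real.sqrt b :=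
        Real.sqrt_le_sqrt (by linarith)
      _ ≤ Real.sqrt a + Real.sqrt b := by
        have := Real.sqrt_nonneg a; linarith
  · have h1 : Real.sqrt (a+b) ^ 2 ≤ (Real.sqrt a + Real.sqrt b) ^ 2 := by
      rw [Real.sq_sqrt (by linarith : (0:ℝ) ≤ a + b)]
      nlinarith [Real.sq_sqrt ha.le, Real.sq_sqrt hb, Real.sqrt_nonneg a, Real.sqrt_nonneg b]
    have h2 : (0:ℝ) ≤ Real.sqrt a + Real.sqrt b := by positivity
    nlinarith [Real.sqrt_nonneg (a+b)]

lemma w2_le_of_couplings {d : ℕ} {μ ν ρ : Measure (Ed d)} {η θ : Measure (Ed d × Ed d)}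
    (hη : IsCoupling η μ ν) (hθ : IsCoupling θ ν ρ)
    (hηf : Wcost 2 η ≠ ⊤) (hθf : Wcost 2 θ ≠ ⊤) :
    W2 μ ρ ≤ Real.sqrt (Wcost 2 η).toReal + Real.sqrt (Wcost 2 θ).toReal := by
  have hb := glue_bound hη hθ
  have hrhs : Wcost 2 η ^ (2:ℝ)⁻¹ + Wcost 2 θ ^ (2:ℝ)⁻¹ ≠ ⊤ := by
    simp [ENNReal.rpow_eq_top_iff, hηf, hθf, ENNReal.add_eq_top]
  have : W2 μ ρ = (minCost 2 μ ρ ^ (2:ℝ)⁻¹).toReal := by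
    unfold W2 Wp; norm_num
  rw [this]
  calc (minCost 2 μ ρ ^ (2:ℝ)⁻¹).toReal
      ≤ (Wcost 2 η ^ (2:ℝ)⁻¹ + Wcost 2 θ ^ (2:ℝ)⁻¹).toReal := ENNReal.toReal_mono hrhs hb
    _ = Real.sqrt (Wcost 2 η).toReal + Real.sqrt (Wcost 2 θ).toReal := by
        rw [ENNReal.toReal_add (by simp [ENNReal.rpow_eq_top_iff, hηf])
          (by simp [ENNReal.rpow_eq_top_iff, hθf]),
          ← ENNReal.toReal_rpow, ← ENNReal.toReal_rpow, Real.sqrt_eq_rpow, Real.sqrt_eq_rpow]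
        norm_num

lemma w2_triangle {d : ℕ} {μ ν ρ : Measure (Ed d)} (hμ : μ ∈ P2 d) (hν : ν ∈ P2 d)
    (hρ : ρ ∈ P2 d) : W2 μ ρ ≤ W2 μ ν + W2 ν ρ := by
  have hA : minCost 2 μ ν ≠ ⊤ := (minCost_lt_top hμ hν).ne
  have hB : minCost 2 ν ρ ≠ ⊤ := (minCost_lt_top hν hρ).ne
  refine le_of_forall_pos_le_add fun e he => ?_
  set δ : ℝ := (e / 2) ^ 2 with hδdef
  have hδpos : 0 < δ := by positivity
  -- pick near-optimal couplings
  have h1 : minCost 2 μ ν < minCost 2 μ ν + ENNReal.ofReal δ :=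
    ENNReal.lt_add_right hA (by simp [hδpos.le, ENNReal.ofReal_eq_zero]; linarith)
  have h2 : minCost 2 ν ρ < minCost 2 ν ρ + ENNReal.ofReal δ :=
    ENNReal.lt_add_right hB (by simp [hδpos.le, ENNReal.ofReal_eq_zero]; linarith)
  obtain ⟨⟨η, hη⟩, hηc⟩ := iInf_lt_iff.1 h1
  obtain ⟨⟨θ, hθ⟩, hθc⟩ := iInf_lt_iff.1 h2
  have hAtop : minCost 2 μ ν + ENNReal.ofReal δ < ⊤ :=
    ENNReal.add_lt_top.2 ⟨hA.lt_top, ENNReal.ofReal_lt_top⟩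
  have hBtop : minCost 2 ν ρ + ENNReal.ofReal δ < ⊤ :=
    ENNReal.add_lt_top.2 ⟨hB.lt_top, ENNReal.ofReal_lt_top⟩
  have hηf : Wcost 2 η ≠ ⊤ := (hηc.trans hAtop).ne
  have hθf : Wcost 2 θ ≠ ⊤ := (hθc.trans hBtop).ne
  have hsq : Real.sqrt δ = e / 2 := by
    rw [hδdef, Real.sqrt_sq (by linarith)]
  calc W2 μ ρ ≤ Real.sqrt (Wcost 2 η).toReal + Real.sqrt (Wcost 2 θ).toReal :=
        w2_le_of_couplings hη hθ hηf hθf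
    _ ≤ Real.sqrt ((minCost 2 μ ν).toReal + δ) + Real.sqrt ((minCost 2 ν ρ).toReal + δ) := by
        refine add_le_add (Real.sqrt_le_sqrt ?_) (Real.sqrt_le_sqrt ?_)
        · have := ENNReal.toReal_mono hAtop.ne hηc.le
          rwa [ENNReal.toReal_add hA ENNReal.ofReal_lt_top.ne, ENNReal.toReal_ofReal hδpos.le] at this
        · have := ENNReal.toReal_mono hBtop.ne hθc.le
          rwa [ENNReal.toReal_add hB ENNReal.ofReal_lt_top.ne, ENNReal.toReal_ofReal hδpos.le] at this
    _ ≤ (Real.sqrt (minCost 2 μ ν).toReal + Real.sqrt δ)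
        + (Real.sqrt (minCost 2 ν ρ).toReal + Real.sqrt δ) := by
        exact add_le_add (sqrt_add_le _ _ hδpos.le) (sqrt_add_le _ _ hδpos.le)
    _ = W2 μ ν + W2 ν ρ + e := by
        rw [hsq, w2_eq_sqrt, w2_eq_sqrt]; ring
lemma norm_sq_combination {d : ℕ} (s : ℝ) (x y z : Ed d) :
    ‖x - ((1-s) • y + s • z)‖^2 =
      (1-s) * ‖x - y‖^2 + s * ‖x - z‖^2 - s * (1-s) * ‖y - z‖^2 := by
  have hx : x - ((1-s) • y + s • z) = (1-s) • (x - y) + s • (x - z) := by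
    module
  have hyz : y - z = (x - z) - (x - y) := by abel
  rw [hx, hyz]
  rw [← real_inner_self_eq_norm_sq, ← real_inner_self_eq_norm_sq,
    ← real_inner_self_eq_norm_sq, ← real_inner_self_eq_norm_sq]
  simp only [inner_add_left, inner_add_right, inner_sub_left, inner_sub_right,
    real_inner_smul_left, real_inner_smul_right]
  rw [real_inner_comm y x, real_inner_comm z x, real_inner_comm z y]
  ring

lemma enorm_sq_le_two_add_two {d : ℕ} {x y z : Ed d} (h : ‖x‖ ≤ ‖y‖ + ‖z‖) :
    (‖x‖₊ : ℝ≥0∞) ^ (2:ℝ) ≤ 2 * (‖y‖₊ : ℝ≥0∞) ^ (2:ℝ) + 2 * (‖z‖₊ : ℝ≥0∞) ^ (2:ℝ) := by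
  have h1 : (‖x‖ : ℝ) ^ 2 ≤ 2 * ‖y‖ ^ 2 + 2 * ‖z‖ ^ 2 := by
    nlinarith [norm_nonneg x, norm_nonneg y, norm_nonneg z, sq_nonneg (‖y‖ - ‖z‖),
      pow_le_pow_left₀ (norm_nonneg x) h 2]
  calc (‖x‖₊ : ℝ≥0∞) ^ (2:ℝ) = ENNReal.ofReal (‖x‖ ^ 2) := nnnorm_rpow_two_eq _
    _ ≤ ENNReal.ofReal (2 * ‖y‖ ^ 2 + 2 * ‖z‖ ^ 2) := ENNReal.ofReal_le_ofReal h1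
    _ ≤ 2 * (‖y‖₊ : ℝ≥0∞) ^ (2:ℝ) + 2 * (‖z‖₊ : ℝ≥0∞) ^ (2:ℝ) := by
        rw [ENNReal.ofReal_add (by positivity) (by positivity)]
        gcongr <;>
        · rw [ENNReal.ofReal_mul (by norm_num), nnnorm_rpow_two_eq]
          norm_num

/-- Key contraction: the JKO step does not increase distance to a global minimizer. -/
lemma jko_contraction {d : ℕ} (G : Measure (Ed d) → EReal)
    (hProper : ProperOn G) (hConv : ConvexAlongGenGeod G)
    {ν : Measure (Ed d)} (hν : IsArgminG G ν)
    {t : ℝ} (ht : 0 < t) {μb : Measure (Ed d)} (hμb : μb ∈ P2 d)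
    {p : Measure (Ed d)} (hp : IsJKOMin G t μb p) :
    W2 p ν ≤ W2 μb ν := by
  have hpP2 : p ∈ P2 d := hp.1
  have hνP2 : ν ∈ P2 d := hν.1
  haveI hγprob' : IsProbabilityMeasure μb := hμb.1
  obtain ⟨curve, ⟨γ, hγprob, hopt0, hopt1, hcurve⟩, hGconv⟩ := hConv p hpP2 ν hνP2 μb hμb
  haveI := hγprob
  have hm1 : Measurable fun z : Ed d × Ed d × Ed d => (z.1, z.2.1) := by fun_prop
  have hm2 : Measurable fun z : Ed d × Ed d × Ed d => (z.1, z.2.2) := by fun_prop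
  have hm3 : Measurable fun z : Ed d × Ed d × Ed d => (z.2.1, z.2.2) := by fun_prop
  set m12 := γ.map (fun z => (z.1, z.2.1)) with hm12def
  set m13 := γ.map (fun z => (z.1, z.2.2)) with hm13def
  set m23 := γ.map (fun z => (z.2.1, z.2.2)) with hm23def
  have hc23 : IsCoupling m23 p ν := by
    refine ⟨Measure.isProbabilityMeasure_map hm3.aemeasurable, ?_, ?_⟩
    · rw [hm23def, Measure.map_map measurable_fst hm3]
      have he : (Prod.fst ∘ fun z : Ed d × Ed d × Ed d => (z.2.1, z.2.2)) =
          (Prod.snd ∘ fun z : Ed d × Ed d × Ed d => (z.1, z.2.1)) := rfl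
      rw [he, ← Measure.map_map measurable_snd hm1]
      exact hopt0.1.2.2
    · rw [hm23def, Measure.map_map measurable_snd hm3]
      have he : (Prod.snd ∘ fun z : Ed d × Ed d × Ed d => (z.2.1, z.2.2)) =
          (Prod.snd ∘ fun z : Ed d × Ed d × Ed d => (z.1, z.2.2)) := rfl
      rw [he, ← Measure.map_map measurable_snd hm2]
      exact hopt1.1.2.2
  set D : ℝ≥0∞ := Wcost 2 m23 with hDdef
  have hDfin : D ≠ ⊤ := by
    refine (lt_of_le_of_lt (wcost_le_moments hc23) ?_).ne
    have h1 := M2_lt_top hpP2; have h2 := M2_lt_top hνP2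
    finiteness
  set Dr : ℝ := D.toReal with hDrdef
  -- finiteness of G ν and G p
  have hGνbot : G ν ≠ ⊥ := hProper.1 ν
  have hGνtop : G ν ≠ ⊤ := by
    obtain ⟨μ0, hμ0, hμ0top⟩ := hProper.2
    intro h
    exact hμ0top (top_le_iff.1 (h ▸ hν.2 μ0 hμ0))
  have hGptop : G p ≠ ⊤ := by
    intro h
    have h1 := hp.2 ν hνP2
    rw [JKOEnergy, JKOEnergy, h] at h1
    have h3 : (⊤ : EReal) + ((1 / (2 * t) * W2 p μb ^ 2 : ℝ) : EReal) = ⊤ :=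
      EReal.top_add_of_ne_bot (by exact_mod_cast EReal.coe_ne_bot _)
    rw [h3] at h1
    have h2 : G ν + ((1 / (2 * t) * W2 ν μb ^ 2 : ℝ) : EReal) ≠ ⊤ := by
      rw [← EReal.coe_toReal hGνtop hGνbot, ← EReal.coe_add]
      exact EReal.coe_ne_top _
    exact h2 (top_le_iff.1 h1)
  have hGpbot : G p ≠ ⊥ := hProper.1 p
  set gp : ℝ := (G p).toReal with hgpdef
  set gn : ℝ := (G ν).toReal with hgndef
  have hgp : G p = (gp : EReal) := (EReal.coe_toReal hGptop hGpbot).symm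
  have hgn : G ν = (gn : EReal) := (EReal.coe_toReal hGνtop hGνbot).symm
  have hgnlegp : gn ≤ gp := by
    have h := hν.2 p hpP2
    rw [hgp, hgn] at h
    exact_mod_cast h
  set c : ℝ := 1 / (2 * t) with hcdef
  have hcpos : 0 < c := by positivity
  -- cost quantities
  have hA : Wcost 2 m12 = minCost 2 μb p := hopt0.2
  have hB : Wcost 2 m13 = minCost 2 μb ν := hopt1.2
  have hAfin : minCost 2 μb p ≠ ⊤ := (minCost_lt_top hμb hpP2).ne
  have hBfin : minCost 2 μb ν ≠ ⊤ := (minCost_lt_top hμb hνP2).ne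
  set Ar : ℝ := (minCost 2 μb p).toReal with hArdef
  set Br : ℝ := (minCost 2 μb ν).toReal with hBrdef
  have hArnn : 0 ≤ Ar := ENNReal.toReal_nonneg
  -- the main inequality for each s ∈ (0,1)
  have hmain : ∀ s : ℝ, 0 < s → s < 1 → (1 - s) * Dr ≤ Br - Ar - (gp - gn) / c := by
    intro s hs0 hs1
    have hsIcc : s ∈ Set.Icc (0:ℝ) 1 := ⟨hs0.le, hs1.le⟩
    have hms : Measurable fun z : Ed d × Ed d × Ed d => (1-s) • z.2.1 + s • z.2.2 := by fun_prop
    have hcs : curve s = γ.map (fun z => (1-s) • z.2.1 + s • z.2.2) := hcurve s hsIcc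
    set ρs := γ.map (fun z => (1-s) • z.2.1 + s • z.2.2) with hρsdef
    haveI : IsProbabilityMeasure ρs := Measure.isProbabilityMeasure_map hms.aemeasurable
    have hρsP2 : ρs ∈ P2 d := by
      refine ⟨inferInstance, ?_⟩
      have heq : (∫⁻ x, ENNReal.ofReal (‖x‖ ^ 2) ∂ρs) =
          ∫⁻ z, (‖(1-s) • z.2.1 + s • z.2.2‖₊ : ℝ≥0∞) ^ (2:ℝ) ∂γ := by
        rw [hρsdef, lintegral_map (by fun_prop) hms]
        exact lintegral_congr fun z => (nnnorm_rpow_two_eq _).symm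
      rw [heq]
      have hb : ∀ z : Ed d × Ed d × Ed d, (‖(1-s) • z.2.1 + s • z.2.2‖₊ : ℝ≥0∞) ^ (2:ℝ) ≤
          2 * (‖z.2.1‖₊ : ℝ≥0∞) ^ (2:ℝ) + 2 * (‖z.2.2‖₊ : ℝ≥0∞) ^ (2:ℝ) := by
        intro z
        refine enorm_sq_le_two_add_two ?_
        calc ‖(1-s) • z.2.1 + s • z.2.2‖ ≤ ‖(1-s) • z.2.1‖ + ‖s • z.2.2‖ := norm_add_le _ _
          _ = |1-s| * ‖z.2.1‖ + |s| * ‖z.2.2‖ := by rw [norm_smul, norm_smul]; rfl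
          _ ≤ ‖z.2.1‖ + ‖z.2.2‖ := by
              rw [abs_of_nonneg (by linarith), abs_of_nonneg hs0.le]
              nlinarith [norm_nonneg z.2.1, norm_nonneg z.2.2]
      calc ∫⁻ z, (‖(1-s) • z.2.1 + s • z.2.2‖₊ : ℝ≥0∞) ^ (2:ℝ) ∂γ
          ≤ ∫⁻ z, (2 * (‖z.2.1‖₊ : ℝ≥0∞) ^ (2:ℝ) + 2 * (‖z.2.2‖₊ : ℝ≥0∞) ^ (2:ℝ)) ∂γ :=
            lintegral_mono hb
        _ = 2 * M2 p + 2 * M2 ν := by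
            rw [lintegral_add_left (by fun_prop), lintegral_const_mul _ (by fun_prop),
              lintegral_const_mul _ (by fun_prop)]
            have e1 : ∫⁻ z : Ed d × Ed d × Ed d, (‖z.2.1‖₊:ℝ≥0∞) ^ (2:ℝ) ∂γ = M2 p := by
              have h := lintegral_fst_coupling hc23 (fun x => (‖x‖₊:ℝ≥0∞) ^ (2:ℝ)) (by fun_prop)
              rw [hm23def, lintegral_map (by fun_prop) hm3] at h
              exact h
            have e2 : ∫⁻ z : Ed d × Ed d × Ed d, (‖z.2.2‖₊:ℝ≥0∞) ^ (2:ℝ) ∂γ = M2 ν := by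
              have h := lintegral_snd_coupling hc23 (fun x => (‖x‖₊:ℝ≥0∞) ^ (2:ℝ)) (by fun_prop)
              rw [hm23def, lintegral_map (by fun_prop) hm3] at h
              exact h
            rw [e1, e2]
        _ < ⊤ := by
            have h1 := M2_lt_top hpP2; have h2 := M2_lt_top hνP2
            finiteness
    -- coupling between μb and ρs
    have hmβ : Measurable fun z : Ed d × Ed d × Ed d => (z.1, (1-s) • z.2.1 + s • z.2.2) := by
      fun_prop
    set βs := γ.map (fun z => (z.1, (1-s) • z.2.1 + s • z.2.2)) with hβsdef
    have hcβ : IsCoupling βs μb ρs := by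
      refine ⟨Measure.isProbabilityMeasure_map hmβ.aemeasurable, ?_, ?_⟩
      · rw [hβsdef, Measure.map_map measurable_fst hmβ]
        have he : (Prod.fst ∘ fun z : Ed d × Ed d × Ed d => (z.1, (1-s) • z.2.1 + s • z.2.2)) =
            (Prod.fst ∘ fun z : Ed d × Ed d × Ed d => (z.1, z.2.1)) := rfl
        rw [he, ← Measure.map_map measurable_fst hm1]
        exact hopt0.1.2.1
      · rw [hβsdef, Measure.map_map measurable_snd hmβ, hρsdef]
        rfl
    -- pointwise identity
    have hptwise : ∀ z : Ed d × Ed d × Ed d,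
        (‖z.1 - ((1-s) • z.2.1 + s • z.2.2)‖₊ : ℝ≥0∞) ^ (2:ℝ)
          + ENNReal.ofReal (s * (1-s)) * (‖z.2.1 - z.2.2‖₊ : ℝ≥0∞) ^ (2:ℝ)
        = ENNReal.ofReal (1-s) * (‖z.1 - z.2.1‖₊ : ℝ≥0∞) ^ (2:ℝ)
          + ENNReal.ofReal s * (‖z.1 - z.2.2‖₊ : ℝ≥0∞) ^ (2:ℝ) := by
      intro z
      have hs1' : (0:ℝ) ≤ 1 - s := by linarith
      have hss : (0:ℝ) ≤ s * (1-s) := mul_nonneg hs0.le hs1'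
      rw [nnnorm_rpow_two_eq, nnnorm_rpow_two_eq, nnnorm_rpow_two_eq, nnnorm_rpow_two_eq,
        ← ENNReal.ofReal_mul hss, ← ENNReal.ofReal_mul hs1', ← ENNReal.ofReal_mul hs0.le,
        ← ENNReal.ofReal_add (sq_nonneg _) (mul_nonneg hss (sq_nonneg _)),
        ← ENNReal.ofReal_add (mul_nonneg hs1' (sq_nonneg _)) (mul_nonneg hs0.le (sq_nonneg _))]
      congr 1
      have h := norm_sq_combination s z.1 z.2.1 z.2.2
      linarith
    have hWβ : Wcost 2 βs = ∫⁻ z, (‖z.1 - ((1-s) • z.2.1 + s • z.2.2)‖₊ : ℝ≥0∞) ^ (2:ℝ) ∂γ := by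
      rw [wcost_eq, hβsdef, lintegral_map (by fun_prop) hmβ]
    have hW12 : Wcost 2 m12 = ∫⁻ z, (‖z.1 - z.2.1‖₊ : ℝ≥0∞) ^ (2:ℝ) ∂γ := by
      rw [wcost_eq, hm12def, lintegral_map (by fun_prop) hm1]
    have hW13 : Wcost 2 m13 = ∫⁻ z, (‖z.1 - z.2.2‖₊ : ℝ≥0∞) ^ (2:ℝ) ∂γ := by
      rw [wcost_eq, hm13def, lintegral_map (by fun_prop) hm2]
    have hW23 : D = ∫⁻ z, (‖z.2.1 - z.2.2‖₊ : ℝ≥0∞) ^ (2:ℝ) ∂γ := by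
      rw [hDdef, wcost_eq, hm23def, lintegral_map (by fun_prop) hm3]
    have hident : Wcost 2 βs + ENNReal.ofReal (s * (1-s)) * D
        = ENNReal.ofReal (1-s) * Wcost 2 m12 + ENNReal.ofReal s * Wcost 2 m13 := by
      rw [hWβ, hW12, hW13, hW23, ← lintegral_const_mul _ (by fun_prop),
        ← lintegral_const_mul _ (by fun_prop), ← lintegral_const_mul _ (by fun_prop),
        ← lintegral_add_left (by fun_prop), ← lintegral_add_left (by fun_prop)]
      exact lintegral_congr hptwise
    have hrhsfin : ENNReal.ofReal (1-s) * Wcost 2 m12 + ENNReal.ofReal s * Wcost 2 m13 ≠ ⊤ := by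
      rw [hA, hB]
      have := hAfin.lt_top; have := hBfin.lt_top
      finiteness
    have hWβfin : Wcost 2 βs ≠ ⊤ := by
      intro h
      apply hrhsfin
      rw [← hident, h]
      simp
    have hreal : (Wcost 2 βs).toReal + s * (1-s) * Dr = (1-s) * Ar + s * Br := by
      have h := congrArg ENNReal.toReal hident
      rw [ENNReal.toReal_add hWβfin (ENNReal.mul_ne_top ENNReal.ofReal_ne_top hDfin),
        ENNReal.toReal_add (ENNReal.mul_ne_top ENNReal.ofReal_ne_top (hA ▸ hAfin))
          (ENNReal.mul_ne_top ENNReal.ofReal_ne_top (hB ▸ hBfin)),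
        ENNReal.toReal_mul, ENNReal.toReal_mul, ENNReal.toReal_mul,
        ENNReal.toReal_ofReal (mul_nonneg hs0.le (by linarith)),
        ENNReal.toReal_ofReal (by linarith), ENNReal.toReal_ofReal hs0.le, hA, hB] at h
      rw [← hArdef, ← hBrdef] at h
      linarith [h]
    -- W2 bound for the curve point
    have hWρs : (W2 ρs μb) ^ 2 ≤ (1-s) * Ar + s * Br - s * (1-s) * Dr := by
      have h1 : minCost 2 ρs μb ≤ Wcost 2 βs := by
        rw [minCost_symm]; exact minCost_le_wcost hcβ
      have h2 : (W2 ρs μb) ^ 2 = (minCost 2 ρs μb).toReal :=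
        w2_sq (minCost_lt_top hρsP2 hμb).ne
      rw [h2]
      have h3 := ENNReal.toReal_mono hWβfin h1
      linarith [hreal, h3]
    -- JKO minimality + convexity
    have hjko := hp.2 ρs hρsP2
    have hconv := hGconv s hsIcc
    rw [hcs] at hconv
    have hchain : G p + ((c * W2 p μb ^ 2 : ℝ) : EReal)
        ≤ (((1-s) * gp + s * gn + c * W2 ρs μb ^ 2 : ℝ) : EReal) := by
      calc G p + ((c * W2 p μb ^ 2 : ℝ) : EReal)
          ≤ G ρs + ((c * W2 ρs μb ^ 2 : ℝ) : EReal) := hjko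
        _ ≤ ((1-s : ℝ) : EReal) * G p + ((s:ℝ) : EReal) * G ν
            + ((c * W2 ρs μb ^ 2 : ℝ) : EReal) := add_le_add_left hconv _
        _ = (((1-s) * gp + s * gn + c * W2 ρs μb ^ 2 : ℝ) : EReal) := by
            rw [hgp, hgn, ← EReal.coe_mul, ← EReal.coe_mul, ← EReal.coe_add, ← EReal.coe_add]
    rw [hgp, ← EReal.coe_add, EReal.coe_le_coe_iff] at hchain
    have hApW : W2 p μb ^ 2 = Ar := by
      rw [hArdef, minCost_symm]
      exact w2_sq (by rw [minCost_symm]; exact hAfin)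
    rw [hApW] at hchain
    have hcomb : gp + c * Ar ≤ (1-s) * gp + s * gn
        + c * ((1-s) * Ar + s * Br - s * (1-s) * Dr) := by
      have h := mul_le_mul_of_nonneg_left hWρs hcpos.le
      linarith [hchain]
    refine le_of_mul_le_mul_left ?_ (mul_pos hcpos hs0)
    have hexp : (c*s) * (Br - Ar - (gp-gn)/c) = c*s*Br - c*s*Ar - s*(gp-gn) := by
      field_simp
    rw [hexp]
    nlinarith [hcomb]
  -- pass to the limit s → 0
  set K : ℝ := Br - Ar - (gp - gn)/c with hKdef
  have hDrnn : 0 ≤ Dr := ENNReal.toReal_nonneg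
  have hDrle : Dr ≤ K := by
    by_contra hcon
    push_neg at hcon
    have hK0 : 0 ≤ K := by
      have h12 := hmain (1/2) (by norm_num) (by norm_num)
      norm_num at h12
      exact le_trans (mul_nonneg (by norm_num) hDrnn) h12
    have hDrpos : 0 < Dr := lt_of_le_of_lt hK0 hcon
    set s0 : ℝ := (Dr - K) / (2 * Dr) with hs0def
    have hs0pos : 0 < s0 := by
      rw [hs0def]
      exact div_pos (by linarith) (by linarith)
    have hs0lt : s0 < 1 := by
      rw [hs0def, div_lt_one (by positivity)]
      linarith
    have h := hmain s0 hs0pos hs0lt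
    rw [hs0def] at h
    have hDrne : Dr ≠ 0 := hDrpos.ne'
    field_simp at h
    have h' := h
    nlinarith [h', hcon, hDrpos]
  -- conclude
  have hW2sq : W2 p ν ^ 2 ≤ W2 μb ν ^ 2 := by
    have h1 : W2 p ν ^ 2 = (minCost 2 p ν).toReal := w2_sq (minCost_lt_top hpP2 hνP2).ne
    have h2 : (minCost 2 p ν).toReal ≤ Dr :=
      ENNReal.toReal_mono hDfin (minCost_le_wcost hc23)
    have h3 : W2 μb ν ^ 2 = Br := (w2_sq hBfin)
    have h4 : K ≤ Br := by
      rw [hKdef]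
      have : 0 ≤ (gp - gn)/c := div_nonneg (by linarith) hcpos.le
      linarith
    linarith
  rw [← Real.sqrt_sq (w2_nonneg p ν), ← Real.sqrt_sq (w2_nonneg μb ν)]
  exact Real.sqrt_le_sqrt hW2sq
/-- Quasi-Fejér monotonicity of the inexact JKO scheme with distance-type errors. -/
theorem inexact_jko_quasi_fejer {d : ℕ} (G : Measure (Ed d) → EReal)
    (hProper : ProperOn G) (hLsc : LscW2 G) (hConv : ConvexAlongGenGeod G)
    (hArgmin : ∃ μstar, IsArgminG G μstar)
    (ε : ℕ → ℝ) (hε : ∀ n, 0 ≤ ε n) (hεsum : Summable ε)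
    (τ : ℕ → ℝ) (hτ : ∀ n, 0 < τ n)
    (J : ℝ → Measure (Ed d) → Measure (Ed d))
    (hJ : ∀ t : ℝ, 0 < t → ∀ μ ∈ P2 d, IsJKOMin G t μ (J t μ))
    (μ : ℕ → Measure (Ed d)) (hμ : ∀ n, μ n ∈ P2 d)
    (herr : ∀ n, W2 (μ (n + 1)) (J (τ n) (μ n)) ≤ ε n) :
    ∀ ν, IsArgminG G ν →
      ∃ C : ℝ, 0 < C ∧
        ∀ n, (W2 (μ (n + 1)) ν) ^ 2 ≤ (W2 (μ n) ν) ^ 2 + C * ε n := by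
  intro ν hν
  have hνP2 : ν ∈ P2 d := hν.1
  have hstep : ∀ n, W2 (μ (n+1)) ν ≤ W2 (μ n) ν + ε n := by
    intro n
    have hpn := hJ (τ n) (hτ n) (μ n) (hμ n)
    have hpnP2 : J (τ n) (μ n) ∈ P2 d := hpn.1
    calc W2 (μ (n+1)) ν ≤ W2 (μ (n+1)) (J (τ n) (μ n)) + W2 (J (τ n) (μ n)) ν :=
          w2_triangle (hμ (n+1)) hpnP2 hνP2
      _ ≤ ε n + W2 (μ n) ν :=
          add_le_add (herr n) (jko_contraction G hProper hConv hν (hτ n) (hμ n) hpn)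
      _ = W2 (μ n) ν + ε n := add_comm _ _
  set S : ℝ := ∑' n, ε n with hSdef
  have hS0 : 0 ≤ S := tsum_nonneg hε
  have hεle : ∀ n, ε n ≤ S := fun n => Summable.le_tsum hεsum n (fun i _ => hε i)
  have hbound : ∀ n, W2 (μ n) ν ≤ W2 (μ 0) ν + S := by
    have hpartial : ∀ n, W2 (μ n) ν ≤ W2 (μ 0) ν + ∑ k ∈ Finset.range n, ε k := by
      intro n
      induction n with
      | zero => simp
      | succ n ih =>
          rw [Finset.sum_range_succ]
          have := hstep n
          linarith
    intro n
    have h1 := Summable.sum_le_tsum (Finset.range n) (fun i _ => hε i) hεsum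
    have h2 := hpartial n
    rw [← hSdef] at h1
    linarith
  have ha0 : 0 ≤ W2 (μ 0) ν := w2_nonneg _ _
  refine ⟨2 * (W2 (μ 0) ν + S) + S + 1, by linarith, ?_⟩
  intro n
  have h1 := hstep n
  have h2 : 0 ≤ W2 (μ (n+1)) ν := w2_nonneg _ _
  have h3 : 0 ≤ W2 (μ n) ν := w2_nonneg _ _
  have h4 := hbound n
  have h5 := hεle n
  have h6 := hε n
  have k1 := pow_le_pow_left₀ h2 h1 2
  have k2 : ε n * W2 (μ n) ν ≤ ε n * (W2 (μ 0) ν + S) := mul_le_mul_of_nonneg_left h4 h6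
  have k3 : ε n * ε n ≤ ε n * S := mul_le_mul_of_nonneg_left h5 h6
  nlinarith [k1, k2, k3, h6]
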